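/- arXiv:2412.17080 — 3 statements merged into one kernel-verified Lean document; each statement's English description precedes it below -/
import Mathlib

section
/- Let V and C be types, r : V → V → Prop, and φ : V → Option C. If u v : V satisfy Relation.TransGen r u v, (φ u).isSome, and (φ v).isSome, then Relation.TransGen (fun a b => (φ b).isSome ∧ medAdj a b) u v; that is, any directed path between two mapped vertices decomposes into a chain of mediated adjacencies whose cut points are all mapped vertices. -/
def medAdj {V C : Type*} (r : V → V → Prop) (φ : V → Option C) (u v : V) : Prop :=
  ∃ l : List V, List.Chain r u (l ++ [v]) ∧ ∀ x ∈ l, φ x = none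

section MediatedAdjacency

variable {V C : Type*} {r : V → V → Prop} {φ : V → Option C} {u b c : V}

theorem medAdj_of_rel (h : r u c) : medAdj r φ u c :=
  ⟨[], List.isChain_pair.2 h, by simp⟩

theorem medAdj.tail (h : medAdj r φ u b) (hb : φ b = none) (hbc : r b c) : medAdj r φ u c := by
  obtain ⟨l, hchain, hl⟩ := h
  refine ⟨l ++ [b], ?_, ?_⟩
  · show List.IsChain r (u :: (l ++ [b] ++ [c]))
    rw [List.append_assoc, List.singleton_append, List.isChain_cons_split]
    exact ⟨hchain, List.isChain_pair.2 hbc⟩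
  · simpa [or_imp, forall_and, hb] using hl

/-- The witness `w` is the last mapped vertex strictly before `c` on the path, or `u` if there is
none. -/
theorem exists_reflTransGen_medAdj_of_transGen (h : Relation.TransGen r u c) :
    ∃ w, Relation.ReflTransGen (fun a b => (φ b).isSome ∧ medAdj r φ a b) u w ∧
      medAdj r φ w c := by
  induction h with
  | single hr => exact ⟨u, .refl, medAdj_of_rel hr⟩
  | @tail b c _ hbc ih =>
    obtain ⟨w, huw, hwb⟩ := ih
    cases hb : φ b with
    | none => exact ⟨w, huw, hwb.tail hb hbc⟩
    | some => exact ⟨b, huw.tail ⟨by simp [hb], hwb⟩, medAdj_of_rel hbc⟩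

end MediatedAdjacency

theorem transGen_decomposes_into_mediated_adjacencies_general {V C : Type*}
    (r : V → V → Prop) (φ : V → Option C) (u v : V)
    (h : Relation.TransGen r u v) (hv : (φ v).isSome) :
    Relation.TransGen (fun a b => (φ b).isSome ∧ medAdj r φ a b) u v := by
  obtain ⟨w, huw, hwv⟩ := exists_reflTransGen_medAdj_of_transGen (φ := φ) h
  exact .tail' huw ⟨hv, hwv⟩

theorem transGen_decomposes_into_mediated_adjacencies {V C : Type*}
    (r : V → V → Prop) (φ : V → Option C) (u v : V)
    (h : Relation.TransGen r u v) (hu : (φ u).isSome) (hv : (φ v).isSome) :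
    Relation.TransGen (fun a b => (φ b).isSome ∧ medAdj r φ a b) u v :=
  transGen_decomposes_into_mediated_adjacencies_general r φ u v h hv
end

section
/- Let V and C be types, r : V → V → Prop, and φ : V → C a (total) clustering map, with cluster edge relation rC c d := c ≠ d ∧ ∃ u v : V, φ u = c ∧ φ v = d ∧ r u v. If u v : V satisfy Relation.TransGen r u v and φ u ≠ φ v, then Relation.TransGen rC (φ u) (φ v); that is, Cluster DAGs preserve directed paths between vertices lying in distinct clusters. -/
namespace Relation

variable {α β : Type*} {r : α → α → Prop} {s : β → β → Prop} {f : α → β}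

theorem ReflTransGen.map_of_ne (hs : ∀ a b, r a b → f a ≠ f b → s (f a) (f b)) {a b : α}
    (h : ReflTransGen r a b) : ReflTransGen s (f a) (f b) :=
  h.lift' f fun x y hxy => show ReflTransGen s (f x) (f y) by
    by_cases hf : f x = f y
    · exact hf ▸ ReflTransGen.refl
    · exact ReflTransGen.single (hs x y hxy hf)

theorem TransGen.map_of_ne (hs : ∀ a b, r a b → f a ≠ f b → s (f a) (f b)) {a b : α}
    (h : TransGen r a b) (hne : f a ≠ f b) : TransGen s (f a) (f b) :=
  ((reflTransGen_iff_eq_or_transGen.mp (h.to_reflTransGen.map_of_ne hs)).resolve_left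
    hne.symm)

end Relation

theorem cdag_preserves_directed_paths {V C : Type*}
    (r : V → V → Prop) (φ : V → C)
    (rC : C → C → Prop)
    (hrC : ∀ c d, rC c d ↔ (c ≠ d ∧ ∃ u v : V, φ u = c ∧ φ v = d ∧ r u v))
    (u v : V)
    (h : Relation.TransGen r u v) (hne : φ u ≠ φ v) :
    Relation.TransGen rC (φ u) (φ v) :=
  h.map_of_ne (fun a b hab hφ => (hrC _ _).mpr ⟨hφ, a, b, rfl, rfl, hab⟩) hne
end

section
/- Let A, B, A', B' be measurable spaces with A' having measurable singletons, let f : A → A' and g : B → B' be measurable, let μ be a probability measure on A × B, and let a' : A' satisfy μ ((fun x : A × B => f x.1) ⁻¹' {a'}) ≠ 0. Then Measure.map Prod.snd (ProbabilityTheory.cond (Measure.map (Prod.map f g) μ) (Prod.fst ⁻¹' {a'})) = Measure.map g (Measure.map Prod.snd (ProbabilityTheory.cond μ ((fun x : A × B => f x.1) ⁻¹' {a'}))); that is, the conditional distribution of the abstracted effect variable given the abstracted cause value a' equals the pushforward under g of the base conditional distribution of the effect variables given that the base cause variables lie in the preimage of a'. -/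
open MeasureTheory ProbabilityTheory

theorem ProbabilityTheory.cond_map {Ω Ω' : Type*} [MeasurableSpace Ω] [MeasurableSpace Ω']
    {μ : Measure Ω} {f : Ω → Ω'} (hf : Measurable f) {s : Set Ω'} (hs : MeasurableSet s) :
    (μ.map f)[|s] = (μ[|f ⁻¹' s]).map f := by
  rw [cond, cond, Measure.restrict_map hf hs, Measure.map_apply hf hs, Measure.map_smul]

theorem abstraction_conditioning_commutes_general
    {A B A' B' : Type*} [MeasurableSpace A] [MeasurableSpace B]
    [MeasurableSpace A'] [MeasurableSpace B'] [MeasurableSingletonClass A']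
    (f : A → A') (g : B → B') (hf : Measurable f) (hg : Measurable g)
    (μ : Measure (A × B))
    (a' : A') :
    Measure.map Prod.snd
        (ProbabilityTheory.cond (Measure.map (Prod.map f g) μ) (Prod.fst ⁻¹' {a'})) =
      Measure.map g
        (Measure.map Prod.snd
          (ProbabilityTheory.cond μ ((fun x : A × B => f x.1) ⁻¹' {a'}))) := by
  have hfg : Measurable (Prod.map f g) := hf.prodMap hg
  rw [cond_map hfg (measurable_fst (.singleton a')), Measure.map_map measurable_snd hfg,
    Measure.map_map hg measurable_snd]
  rfl

theorem abstraction_conditioning_commutes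
    {A B A' B' : Type*} [MeasurableSpace A] [MeasurableSpace B]
    [MeasurableSpace A'] [MeasurableSpace B'] [MeasurableSingletonClass A']
    (f : A → A') (g : B → B') (hf : Measurable f) (hg : Measurable g)
    (μ : Measure (A × B)) [IsProbabilityMeasure μ]
    (a' : A') (hns : μ ((fun x : A × B => f x.1) ⁻¹' {a'}) ≠ 0) :
    Measure.map Prod.snd
        (ProbabilityTheory.cond (Measure.map (Prod.map f g) μ) (Prod.fst ⁻¹' {a'})) =
      Measure.map g
        (Measure.map Prod.snd
          (ProbabilityTheory.cond μ ((fun x : A × B => f x.1) ⁻¹' {a'}))) :=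
  abstraction_conditioning_commutes_general f g hf hg μ a'
end
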